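/- With no channel knowledge at the transmitter and the optimal fixed rate λ(snr) = snr/log_e 2, the ON–OFF Markov fluid source achieves minimum energy per bit lim_{snr→0⁺} snr / r(snr) = 2e·log_e 2, and the throughput r is twice differentiable at snr = 0 with wideband slope S₀ = −2·(r'(0))²·log_e 2 / r''(0) = 1 / (θ·(ζ − 1)/(2·log_e 2) + θ·e/log_e 2 + 2e), where ζ = 2β/(α(α + β)). -/

import Mathlib

open Real Filter Set Topology

/-!
With `λ = snr / log 2` one has `2 ^ λ = exp snr`, so `P s = exp (-(exp s - 1) / s) / (exp s + 1)`
has a removable singularity at `0`. Once it is filled in, `r = R ∘ log ∘ (1 - ε)` with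
`ε s = P s · (1 - exp (-θ s / log 2))` and `R` rational, and each layer is twice differentiable
at `0`, so the second-order chain rule gives `r'(0) = 1 / (2 e log 2)` and `r''(0)`. `P` itself
is only shown to be `C¹`: its second derivative is not needed because the other factor of `ε`
vanishes at `0`. Finally `snr / r snr → 1 / r'(0)` since `r 0 = 0`.
-/

section TwiceDifferentiable

variable {𝕜 : Type*} [NontriviallyNormedField 𝕜]

theorem HasDerivAt.mul_of_continuousAt_of_eq_zero {p f : 𝕜 → 𝕜} {c x : 𝕜}
    (hf : HasDerivAt f c x) (hp : ContinuousAt p x) (hfx : f x = 0) :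
    HasDerivAt (fun y => p y * f y) (p x * c) x := by
  rw [hasDerivAt_iff_tendsto_slope] at hf ⊢
  have hslope : slope (fun y => p y * f y) x = fun y => p y * slope f x y := by
    ext y
    simp only [slope_def_field, hfx, mul_zero, sub_zero, mul_div_assoc]
  rw [hslope]
  exact (hp.tendsto.mono_left nhdsWithin_le_nhds).mul hf

def HasDerivTwiceAt (f : 𝕜 → 𝕜) (f₁ f₂ x : 𝕜) : Prop :=
  ∃ f' : 𝕜 → 𝕜, (∀ᶠ y in 𝓝 x, HasDerivAt f (f' y) y) ∧ f' x = f₁ ∧ HasDerivAt f' f₂ x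

namespace HasDerivTwiceAt

variable {f : 𝕜 → 𝕜} {f₁ f₂ x : 𝕜}

theorem of_hasDerivAt {f' : 𝕜 → 𝕜} (hf : ∀ᶠ y in 𝓝 x, HasDerivAt f (f' y) y)
    (hf' : HasDerivAt f' f₂ x) : HasDerivTwiceAt f (f' x) f₂ x :=
  ⟨f', hf, rfl, hf'⟩

theorem comp {φ : 𝕜 → 𝕜} {φ₁ φ₂ y : 𝕜} (hφ : HasDerivTwiceAt φ φ₁ φ₂ y)
    (hf : HasDerivTwiceAt f f₁ f₂ x) (hfx : f x = y) :
    HasDerivTwiceAt (fun z => φ (f z)) (φ₁ * f₁) (φ₂ * f₁ ^ 2 + φ₁ * f₂) x := by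
  obtain ⟨φ', hφ', rfl, hφ''⟩ := hφ
  obtain ⟨f', hf', rfl, hf''⟩ := hf
  subst hfx
  have hφ'_near : ∀ᶠ z in 𝓝 x, HasDerivAt φ (φ' (f z)) (f z) :=
    hf'.self_of_nhds.continuousAt.tendsto.eventually hφ'
  refine ⟨fun z => φ' (f z) * f' z, ?_, rfl, ?_⟩
  · filter_upwards [hφ'_near, hf'] with z hφz hfz
    exact hφz.comp z hfz
  · exact ((hφ''.comp x hf'.self_of_nhds).mul hf'').congr_deriv (by simp only [Function.comp]; ring)

theorem mul_of_eq_zero {p p' : 𝕜 → 𝕜} (hp : ∀ᶠ y in 𝓝 x, HasDerivAt p (p' y) y)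
    (hp' : ContinuousAt p' x) (hf : HasDerivTwiceAt f f₁ f₂ x) (hfx : f x = 0) :
    HasDerivTwiceAt (fun y => p y * f y) (p x * f₁) (2 * p' x * f₁ + p x * f₂) x := by
  obtain ⟨f', hf', rfl, hf''⟩ := hf
  refine ⟨fun y => p' y * f y + p y * f' y, ?_, by simp [hfx], ?_⟩
  · filter_upwards [hp, hf'] with y hpy hfy
    exact hpy.mul hfy
  · exact ((hf'.self_of_nhds.mul_of_continuousAt_of_eq_zero hp' hfx).add
      (hp.self_of_nhds.mul hf'')).congr_deriv (by ring)

end HasDerivTwiceAt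

end TwiceDifferentiable

theorem tendsto_div_of_hasDerivAt_zero {f : ℝ → ℝ} {c : ℝ} (hf : HasDerivAt f c 0)
    (hf0 : f 0 = 0) (hc : c ≠ 0) : Tendsto (fun s => s / f s) (𝓝[≠] 0) (𝓝 c⁻¹) := by
  have hslope := hf.tendsto_slope_zero.inv₀ hc
  simp only [zero_add, hf0, sub_zero, smul_eq_mul, mul_inv, inv_inv] at hslope
  simpa only [div_eq_mul_inv, mul_comm] using hslope

theorem hasDerivTwiceAt_log_one_sub {y : ℝ} (hy : y ≠ 1) :
    HasDerivTwiceAt (fun z => log (1 - z)) (-(1 - y)⁻¹) (-((1 - y) ^ 2)⁻¹) y := by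
  have hy' : 1 - y ≠ 0 := sub_ne_zero.2 hy.symm
  have hnear : ∀ᶠ z in 𝓝 y, 1 - z ≠ 0 :=
    ((continuous_const.sub continuous_id).continuousAt.eventually_ne hy')
  refine .of_hasDerivAt (f' := fun z => -(1 - z)⁻¹) ?_ ?_
  · filter_upwards [hnear] with z hz
    exact (((hasDerivAt_id z).const_sub 1).log hz).congr_deriv (by simp [div_eq_mul_inv])
  · exact (((hasDerivAt_id y).const_sub 1).inv hy').neg.congr_deriv (by simp)

theorem hasDerivTwiceAt_one_sub_exp_neg_mul (a x : ℝ) :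
    HasDerivTwiceAt (fun s => 1 - exp (-(a * s))) (a * exp (-(a * x)))
      (-a ^ 2 * exp (-(a * x))) x := by
  have hlin (s : ℝ) : HasDerivAt (fun t => -(a * t)) (-a) s :=
    ((hasDerivAt_id' s).const_mul a).neg.congr_deriv (by ring)
  refine .of_hasDerivAt (f' := fun s => a * exp (-(a * s))) (.of_forall fun s => ?_) ?_
  · exact ((hlin s).exp.const_sub 1).congr_deriv (by ring)
  · exact ((hlin x).exp.const_mul a).congr_deriv (by ring)

noncomputable def onOffThroughput (c α β x : ℝ) : ℝ := -c * ((α + β - x) / (α - x)) * x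

theorem hasDerivTwiceAt_onOffThroughput (c β : ℝ) {α x : ℝ} (hx : x ≠ α) :
    HasDerivTwiceAt (onOffThroughput c α β) (-c * (1 + α * β / (α - x) ^ 2))
      (-(2 * c * α * β) / (α - x) ^ 3) x := by
  have hx' : α - x ≠ 0 := sub_ne_zero.2 hx.symm
  have hnear : ∀ᶠ z in 𝓝 x, α - z ≠ 0 :=
    (continuous_const.sub continuous_id).continuousAt.eventually_ne hx'
  refine .of_hasDerivAt (f' := fun z => -c * (1 + α * β / (α - z) ^ 2)) ?_ ?_
  · filter_upwards [hnear] with z hz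
    have hsub (b : ℝ) : HasDerivAt (fun t => b - t) (-1) z := by
      simpa using (hasDerivAt_id z).const_sub b
    refine ((((hsub (α + β)).div (hsub α) hz).const_mul (-c)).mul (hasDerivAt_id' z)).congr_deriv ?_
    simp only [Pi.div_apply]
    field_simp
    ring
  · have hsq : HasDerivAt (fun t => (α - t) ^ 2) (-(2 * (α - x))) x :=
      (((hasDerivAt_id' x).const_sub α).pow 2).congr_deriv (by norm_num)
    refine (((hasDerivAt_const x (α * β)).div hsq (pow_ne_zero 2 hx')).const_add 1
      |>.const_mul (-c)).congr_deriv ?_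
    field_simp
    ring

noncomputable def expSlope : ℝ → ℝ := dslope exp 0

noncomputable def expSlopeDeriv (s : ℝ) : ℝ :=
  if s = 0 then 1 / 2 else (s * exp s - (exp s - 1)) / s ^ 2

theorem expSlope_zero : expSlope 0 = 1 := by
  simp [expSlope, dslope_same]

theorem expSlope_of_ne_zero {s : ℝ} (hs : s ≠ 0) : expSlope s = (exp s - 1) / s := by
  simp [expSlope, dslope_of_ne _ hs, slope_def_field]

theorem continuousAt_expSlopeDeriv : ContinuousAt expSlopeDeriv 0 := by
  rw [← continuousWithinAt_compl_self, ContinuousWithinAt, expSlopeDeriv, if_pos rfl]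
  have hnum (s : ℝ) : HasDerivAt (fun t => t * exp t - (exp t - 1)) (s * exp s) s :=
    (((hasDerivAt_id s).mul (hasDerivAt_exp s)).sub ((hasDerivAt_exp s).sub_const 1)).congr_deriv
      (by simp)
  have hden (s : ℝ) : HasDerivAt (fun t => t ^ 2) (2 * s) s := by
    simpa using hasDerivAt_pow 2 s
  have hratio : Tendsto (fun s => s * exp s / (2 * s)) (𝓝[≠] 0) (𝓝 (1 / 2)) := by
    have hlim : Tendsto (fun s => exp s / 2) (𝓝[≠] 0) (𝓝 (1 / 2)) := by
      simpa using (continuous_exp.tendsto 0).div_const 2 |>.mono_left nhdsWithin_le_nhds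
    refine hlim.congr' ?_
    filter_upwards [self_mem_nhdsWithin] with s (hs : s ≠ 0)
    field_simp
  have hlhopital := HasDerivAt.lhopital_zero_nhdsNE (.of_forall hnum) (.of_forall hden)
    (by filter_upwards [self_mem_nhdsWithin] with s hs using by simpa using hs)
    (by simpa using ((hnum 0).continuousAt.tendsto.mono_left nhdsWithin_le_nhds))
    (by simpa using ((hden 0).continuousAt.tendsto.mono_left nhdsWithin_le_nhds)) hratio
  refine hlhopital.congr' ?_
  filter_upwards [self_mem_nhdsWithin] with s hs
  simp [expSlopeDeriv, if_neg (show s ≠ 0 from hs)]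

theorem hasDerivAt_expSlope (s : ℝ) : HasDerivAt expSlope (expSlopeDeriv s) s := by
  refine hasDerivAt_of_hasDerivAt_of_ne' (fun t ht => ?_)
    (continuousAt_dslope_same.2 differentiableAt_exp) continuousAt_expSlopeDeriv s
  have heq : expSlope =ᶠ[𝓝 t] fun y => (exp y - 1) / y :=
    (eventually_ne_nhds ht).mono fun y hy => expSlope_of_ne_zero hy
  refine HasDerivAt.congr_of_eventuallyEq ?_ heq
  refine (((hasDerivAt_exp t).sub_const 1).div (hasDerivAt_id t) ht).congr_deriv ?_
  simp [expSlopeDeriv, if_neg ht, mul_comm]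

/-- `P` with its removable singularity at `0` filled in. The statement's junk value
`P 0 = 1 / 2` (from `0 / 0 = 0`) never matters: `P` only occurs multiplied by
`1 - exp (-θ λ)`, which vanishes at `0`. -/
noncomputable def onProb (s : ℝ) : ℝ := exp (-expSlope s) / (exp s + 1)

noncomputable def onProbDeriv (s : ℝ) : ℝ :=
  exp (-expSlope s) * -expSlopeDeriv s / (exp s + 1) - exp (-expSlope s) * exp s / (exp s + 1) ^ 2

theorem onProb_zero : onProb 0 = exp (-1) / 2 := by
  norm_num [onProb, expSlope_zero]

theorem onProbDeriv_zero : onProbDeriv 0 = -exp (-1) / 2 := by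
  simp only [onProbDeriv, expSlope_zero, expSlopeDeriv, ↓reduceIte, exp_zero]
  ring

theorem hasDerivAt_onProb (s : ℝ) : HasDerivAt onProb (onProbDeriv s) s := by
  refine ((hasDerivAt_expSlope s).neg.exp.div ((hasDerivAt_exp s).add_const 1)
    (by positivity)).congr_deriv ?_
  rw [onProbDeriv, Pi.neg_apply]
  field_simp

theorem continuousAt_onProbDeriv : ContinuousAt onProbDeriv 0 := by
  have hu := (hasDerivAt_expSlope 0).continuousAt
  have hu' := continuousAt_expSlopeDeriv
  unfold onProbDeriv
  fun_prop (disch := positivity)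

theorem onProb_mul_one_sub_exp (a s : ℝ) :
    exp (-((exp s - 1) / s)) / (exp s + 1) * (1 - exp (-(a * s))) =
      onProb s * (1 - exp (-(a * s))) := by
  rcases eq_or_ne s 0 with rfl | hs
  · simp
  · rw [onProb, expSlope_of_ne_zero hs]

theorem hasDerivTwiceAt_onProb_mul_one_sub_exp (a : ℝ) :
    HasDerivTwiceAt (fun s => onProb s * (1 - exp (-(a * s)))) (a * exp (-1) / 2)
      (-(2 * a + a ^ 2) * exp (-1) / 2) 0 := by
  convert HasDerivTwiceAt.mul_of_eq_zero (.of_forall hasDerivAt_onProb) continuousAt_onProbDeriv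
    (hasDerivTwiceAt_one_sub_exp_neg_mul a 0) (by simp) using 2
  · simp only [onProb_zero, mul_zero, neg_zero, exp_zero, mul_one]
    ring
  · simp only [onProbDeriv_zero, onProb_zero, mul_zero, neg_zero, exp_zero, mul_one]
    ring

theorem hasDerivTwiceAt_throughput_zero {θ α : ℝ} (β a : ℝ) (hθ : θ ≠ 0)
    (hα : α ≠ 0) (hαβ : α + β ≠ 0) :
    HasDerivTwiceAt
      (fun s => onOffThroughput (α / (α + β) / θ) α β (log (1 - onProb s * (1 - exp (-(a * s))))))
      (a * exp (-1) / (2 * θ))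
      (-((2 * β / (α * (α + β)) - 1) * (a * exp (-1) / 2) ^ 2 + (2 * a + a ^ 2) * exp (-1) / 2) / θ)
      0 := by
  convert (hasDerivTwiceAt_onOffThroughput (α / (α + β) / θ) β hα.symm).comp
    ((hasDerivTwiceAt_log_one_sub zero_ne_one).comp
      (hasDerivTwiceAt_onProb_mul_one_sub_exp a) (by simp)) (by simp) using 2
  · field_simp
    ring
  · field_simp
    ring

/-- With no channel knowledge at the transmitter and the optimal fixed
rate `λ(snr) = snr/log 2`, the ON–OFF Markov fluid source achieves minimum energy per
bit `lim_{snr→0⁺} snr / r(snr) = 2e·log 2`, and the throughput `r` is twice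
differentiable (from the right) at `snr = 0` with wideband slope
`S₀ = −2·(r'(0))²·log 2 / r''(0) = 1 / (θ·(ζ − 1)/(2·log 2) + θ·e/log 2 + 2e)`,
where `ζ = 2β/(α(α + β))`. -/
theorem no_CSI_energy_efficiency_markov_fluid
    (θ α β : ℝ) (hθ : 0 < θ) (hα : 0 < α) (hβ : 0 < β)
    (Pon : ℝ) (hPon : Pon = α / (α + β))
    (ζ : ℝ) (hζ : ζ = 2 * β / (α * (α + β)))
    (lam : ℝ → ℝ) (hlam : ∀ snr, lam snr = snr / Real.log 2)
    (P : ℝ → ℝ)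
    (hP : ∀ snr, P snr =
      Real.exp (-(((2 : ℝ) ^ lam snr - 1) / snr)) / ((2 : ℝ) ^ lam snr + 1))
    (g : ℝ → ℝ)
    (hg : ∀ snr, g snr = 1 - P snr * (1 - Real.exp (-θ * lam snr)))
    (r : ℝ → ℝ)
    (hr : ∀ snr, r snr = -(Pon / θ) *
      ((α + β - Real.log (g snr)) / (α - Real.log (g snr))) * Real.log (g snr)) :
    Filter.Tendsto (fun snr => snr / r snr) (nhdsWithin 0 (Set.Ioi 0))
      (nhds (2 * Real.exp 1 * Real.log 2)) ∧
    ∃ r' : ℝ → ℝ, ∃ d2 : ℝ,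
      (∀ᶠ snr in nhdsWithin 0 (Set.Ici 0), HasDerivWithinAt r (r' snr) (Set.Ici 0) snr) ∧
      HasDerivWithinAt r' d2 (Set.Ici 0) 0 ∧
      -2 * (r' 0) ^ 2 * Real.log 2 / d2
        = 1 / (θ * (ζ - 1) / (2 * Real.log 2)
            + θ * Real.exp 1 / Real.log 2 + 2 * Real.exp 1) := by
  have hlog2 : 0 < log 2 := log_pos one_lt_two
  have hg_eq (s : ℝ) : g s = 1 - onProb s * (1 - exp (-(θ / log 2 * s))) := by
    have hpow : (2 : ℝ) ^ lam s = exp s := by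
      rw [hlam, rpow_def_of_pos two_pos, mul_div_cancel₀ _ hlog2.ne']
    rw [hg, hP, hpow, ← onProb_mul_one_sub_exp (θ / log 2) s, hlam]
    congr 4
    ring
  have hr_eq : r = fun s => onOffThroughput (Pon / θ) α β (log (g s)) := funext hr
  simp only [hg_eq, hPon] at hr_eq
  obtain ⟨r', hr', hr'0, hr''⟩ := hr_eq ▸
    hasDerivTwiceAt_throughput_zero β (θ / log 2) hθ.ne' hα.ne' (by positivity)
  have hr0 : r 0 = 0 := by simp [hr_eq, onOffThroughput]
  have hr'0_pos : 0 < r' 0 := by rw [hr'0]; positivity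
  refine ⟨?_, r', _, ?_, hr''.hasDerivWithinAt, ?_⟩
  · have hlim := tendsto_div_of_hasDerivAt_zero hr'.self_of_nhds hr0 hr'0_pos.ne'
    have hval : (r' 0)⁻¹ = 2 * exp 1 * log 2 := by
      rw [hr'0, exp_neg]
      field_simp
    rw [hval] at hlim
    exact hlim.mono_left (nhdsWithin_mono _ fun s hs => ne_of_gt hs)
  · exact (hr'.filter_mono nhdsWithin_le_nhds).mono fun s hs => hs.hasDerivWithinAt
  · rw [one_div, ← div_mul_cancel_left₀ (by positivity : -2 * r' 0 ^ 2 * log 2 ≠ 0)]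
    congr 1
    rw [hr'0, hζ, exp_neg]
    field_simp
    ring
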